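/- The differential graded algebra (ℚ[t] ⊗ Λ(x,y,z), D₁) with |t| = 2, |x| = 3, |y| = 5, |z| = 7, D₁t = D₁x = D₁y = 0 and D₁z = xy + t⁴ has finite-dimensional cohomology, and the differential graded algebra (ℚ[t] ⊗ Λ(x',y',z'), D₂) with |t| = 2, |x'| = 5, |y'| = 7, |z'| = 11, D₂t = D₂x' = D₂y' = 0 and D₂z' = x'y' + t⁶ has finite-dimensional cohomology; moreover the ℚ[t]-algebra map F with F(x') = xt, F(y') = yt, F(z') = zt² is a map of differential graded algebras (ℚ[t] ⊗ Λ(x',y',z'), D₂) → (ℚ[t] ⊗ Λ(x,y,z), D₁). -/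

import Mathlib

/-!
Framework for Sullivan-type free graded-commutative differential graded
algebras over `ℚ`, and for the rational toral rank of spaces and maps,
following T. Yamaguchi, "Rational toral rank of a map".
-/

/-- Exponent vectors indexing the monomial basis of a free graded-commutative
algebra on generators indexed by `ι` with degrees `deg`: finitely supported
`ℕ`-valued functions whose value on odd-degree (exterior) generators is at
most `1`. -/
def MonIdx (ι : Type) (deg : ι → ℕ) : Type :=
  {e : ι →₀ ℕ // ∀ i, Odd (deg i) → e i ≤ 1}

/-- The total degree of the monomial with exponent vector `e`. -/
def monDeg {ι : Type} (deg : ι → ℕ) (e : MonIdx ι deg) : ℕ :=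
  e.1.sum fun i k => k * deg i

/-- The monomial with exponent vector `e`: the product of the corresponding
powers of the generators `gen`, taken in increasing order of the indices. -/
def monProd {ι : Type} [LinearOrder ι] (deg : ι → ℕ) {A : Type} [Ring A]
    (gen : ι → A) (e : MonIdx ι deg) : A :=
  ((e.1.support.sort (· ≤ ·)).map fun i => gen i ^ e.1 i).prod

/-- A realization of the free graded-commutative `ℚ`-algebra `ΛV` on
generators `gen i` of degree `deg i` (polynomial algebra on the even-degree
generators tensored with the exterior algebra on the odd-degree generators):
the carrier `A` is a `ℚ`-algebra with a grading `grading` in which homogeneous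
elements graded-commute, the ordered monomials in the generators form a
`ℚ`-basis of `A`, and `grading n` is spanned by the monomials of total
degree `n`. -/
structure FGCA0 (ι : Type) [LinearOrder ι] (deg : ι → ℕ)
    (A : Type) [Ring A] [Algebra ℚ A] : Type where
  gen : ι → A
  grading : ℕ → Submodule ℚ A
  one_mem : (1 : A) ∈ grading 0
  mul_mem : ∀ {m n : ℕ} {x y : A}, x ∈ grading m → y ∈ grading n →
      x * y ∈ grading (m + n)
  gen_mem : ∀ i, gen i ∈ grading (deg i)
  gcomm : ∀ {m n : ℕ} (x y : A), x ∈ grading m → y ∈ grading n →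
      x * y = ((-1 : ℚ) ^ (m * n)) • (y * x)
  basis : Module.Basis (MonIdx ι deg) ℚ A
  basis_eq : ∀ e, basis e = monProd deg gen e
  grading_eq : ∀ n, grading n =
      Submodule.span ℚ {x : A | ∃ e : MonIdx ι deg, monDeg deg e = n ∧ x = monProd deg gen e}

/-- `D` is a degree `+1` derivation of `M`: it raises degrees by one and
satisfies the graded Leibniz rule. -/
def IsDegOneDerivation {ι : Type} [LinearOrder ι] {deg : ι → ℕ} {A : Type}
    [Ring A] [Algebra ℚ A] (M : FGCA0 ι deg A) (D : A →ₗ[ℚ] A) : Prop :=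
  (∀ (n : ℕ) (x : A), x ∈ M.grading n → D x ∈ M.grading (n + 1)) ∧
  (∀ (n : ℕ) (x y : A), x ∈ M.grading n →
      D (x * y) = D x * y + ((-1 : ℚ) ^ n) • (x * D y))

/-- `D` is a differential on `M`: a degree `+1` derivation with `D ∘ D = 0`. -/
def IsDifferential {ι : Type} [LinearOrder ι] {deg : ι → ℕ} {A : Type}
    [Ring A] [Algebra ℚ A] (M : FGCA0 ι deg A) (D : A →ₗ[ℚ] A) : Prop :=
  IsDegOneDerivation M D ∧ ∀ x, D (D x) = 0

/-- A realization of a free graded-commutative (Sullivan-type) differential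
graded `ℚ`-algebra `(ΛV, D)` on generators of degrees `deg`. -/
structure FGCA (ι : Type) [LinearOrder ι] (deg : ι → ℕ)
    (A : Type) [Ring A] [Algebra ℚ A] extends FGCA0 ι deg A where
  D : A →ₗ[ℚ] A
  isDifferential : IsDifferential toFGCA0 D

/-- The total cohomology `ker D / im D` of a differential `D` is a
finite-dimensional `ℚ`-vector space, i.e. `dim H^*(A, D) < ∞`. -/
def FiniteCohomology {A : Type} [Ring A] [Algebra ℚ A] (D : A →ₗ[ℚ] A) : Prop :=
  FiniteDimensional ℚ
    (↥(LinearMap.ker D) ⧸ (LinearMap.range D).comap (LinearMap.ker D).subtype)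



/-!
Write `t, x, y, z` for the generators and `D z = x y + t^k`. The words `t^a x^b y^c z^d` form a
basis on which `D (t^a x^b y^c z) = (-1)^(b+c) t^(a+k) x^b y^c + [b = c = 0] t^a x y`. An explicit
left inverse `G` of `D` on the words containing `z` makes `id - D G - G D` vanish on all words
with `a ≥ 2k`, so this homotopy leaves only the finitely many words with `a < 2k` to represent
cohomology classes.

Since `t` is central, `t, x t, y t, z t²` satisfy the graded-commutation relations of `t, x, y, z`,
so freeness gives the algebra map `F`, with `F (t^a x^b y^c z^d) = t^(a+b+c+2d) x^b y^c z^d`.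
Because `F (x' y' + t^(k+2)) = (x y + t^k) t² = D (z t²)`, the maps `F ∘ D₂` and `D₁ ∘ F`
agree on every basis word.
-/

abbrev WordIndex : Type := ℕ × Bool × Bool × Bool

section Words

variable {R : Type*}

def word [Monoid R] (g : Fin 4 → R) : WordIndex → R
  | (a, b, c, d) => g 0 ^ a * (g 1 ^ b.toNat * g 2 ^ c.toNat * g 3 ^ d.toNat)

structure GradedCommRelations [Ring R] (g : Fin 4 → R) : Prop where
  commute : ∀ i, Commute (g 0) (g i)
  mul_self : ∀ i, i ≠ 0 → g i * g i = 0
  anticomm : ∀ i j, i ≠ 0 → j ≠ 0 → g j * g i = -(g i * g j)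

-- The sign comes from moving `x^b'` past `y^c z^d` and `y^c'` past `z^d`.
def wordMulCoeff : WordIndex → WordIndex → ℚ
  | (_, b, c, d), (_, b', c', d') =>
    if (b && b') || (c && c') || (d && d') then 0
    else (-1) ^ (b'.toNat * (c.toNat + d.toNat) + c'.toNat * d.toNat)

def wordMulIndex : WordIndex → WordIndex → WordIndex
  | (a, b, c, d), (a', b', c', d') => (a + a', b || b', c || c', d || d')

variable [Ring R] {g : Fin 4 → R}

theorem GradedCommRelations.commute_pow_exterior (hg : GradedCommRelations g) (n b c d : ℕ) :
    Commute (g 0 ^ n) (g 1 ^ b * g 2 ^ c * g 3 ^ d) :=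
  (((hg.commute 1).pow_pow n b).mul_right ((hg.commute 2).pow_pow n c)).mul_right
    ((hg.commute 3).pow_pow n d)

theorem GradedCommRelations.word_add_fst (hg : GradedCommRelations g) (a m : ℕ) (b c d : Bool) :
    word g (a + m, b, c, d) = word g (a, b, c, d) * g 0 ^ m := by
  rw [word, word, pow_add, mul_assoc, (hg.commute_pow_exterior m _ _ _).eq, ← mul_assoc]

theorem GradedCommRelations.exterior_mul [Algebra ℚ R] (hg : GradedCommRelations g)
    (b c d b' c' d' : Bool) :
    g 1 ^ b.toNat * g 2 ^ c.toNat * g 3 ^ d.toNat *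
        (g 1 ^ b'.toNat * g 2 ^ c'.toNat * g 3 ^ d'.toNat) =
      wordMulCoeff (0, b, c, d) (0, b', c', d') •
        (g 1 ^ (b || b').toNat * g 2 ^ (c || c').toNat * g 3 ^ (d || d').toNat) := by
  have hxx := hg.mul_self 1 (by decide)
  have hyy := hg.mul_self 2 (by decide)
  have hzz := hg.mul_self 3 (by decide)
  have hyx := hg.anticomm 1 2 (by decide) (by decide)
  have hzx := hg.anticomm 1 3 (by decide) (by decide)
  have hzy := hg.anticomm 2 3 (by decide) (by decide)
  have push {u v : R} (h : v * u = -(u * v)) (r : R) : v * (u * r) = -(u * (v * r)) := by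
    rw [← mul_assoc, h, neg_mul, mul_assoc]
  have kill {u : R} (h : u * u = 0) (r : R) : u * (u * r) = 0 := by
    rw [← mul_assoc, h, zero_mul]
  cases b <;> cases c <;> cases d <;> cases b' <;> cases c' <;> cases d' <;>
    simp [wordMulCoeff, mul_assoc, push hyx, push hzx, push hzy, kill hxx, kill hyy,
      hxx, hyy, hzz, hyx, hzx, hzy]

theorem GradedCommRelations.word_mul_word [Algebra ℚ R] (hg : GradedCommRelations g)
    (p q : WordIndex) :
    word g p * word g q = wordMulCoeff p q • word g (wordMulIndex p q) := by
  obtain ⟨a, b, c, d⟩ := p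
  obtain ⟨a', b', c', d'⟩ := q
  calc word g (a, b, c, d) * word g (a', b', c', d')
      = g 0 ^ (a + a') * (g 1 ^ b.toNat * g 2 ^ c.toNat * g 3 ^ d.toNat *
          (g 1 ^ b'.toNat * g 2 ^ c'.toNat * g 3 ^ d'.toNat)) := by
        rw [word, word, mul_assoc, ← mul_assoc _ (g 0 ^ a'),
          ← (hg.commute_pow_exterior a' _ _ _).eq, mul_assoc, ← mul_assoc, ← pow_add]
    _ = _ := by
        rw [hg.exterior_mul, mul_smul_comm]
        rfl

section CentralTwist

variable {u : Fin 4 → R} (hu : ∀ i r, Commute (u i) r)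
include hu

theorem word_mul_central (p : WordIndex) :
    word (fun i => g i * u i) p = word g p * word u p := by
  obtain ⟨a, b, c, d⟩ := p
  have hU (i : Fin 4) (n : ℕ) (r : R) : Commute (u i ^ n) r := (hu i r).pow_left n
  simp only [word, fun i => (hu i (g i)).symm.mul_pow]
  rw [(hU 1 b.toNat (g 2 ^ c.toNat)).mul_mul_mul_comm,
    ((hU 1 b.toNat _).mul_left (hU 2 c.toNat (g 3 ^ d.toNat))).mul_mul_mul_comm,
    (hU 0 a _).mul_mul_mul_comm]

theorem GradedCommRelations.mul_central (hg : GradedCommRelations g) :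
    GradedCommRelations (fun i => g i * u i) where
  commute i := ((hg.commute i).mul_right (hu i (g 0)).symm).mul_left (hu 0 _)
  mul_self i hi := by
    rw [(hu i (g i)).mul_mul_mul_comm, hg.mul_self i hi, zero_mul]
  anticomm i j hi hj := by
    rw [(hu j (g i)).mul_mul_mul_comm, (hu i (g j)).mul_mul_mul_comm, hg.anticomm i j hi hj,
      neg_mul, (hu j (u i)).eq]

end CentralTwist

end Words

theorem List.prod_map_filter_of_eq_one {α M : Type*} [Monoid M] (l : List α) (p : α → Bool)
    (f : α → M) (h : ∀ x ∈ l, p x = false → f x = 1) :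
    ((l.filter p).map f).prod = (l.map f).prod := by
  induction l with
  | nil => rfl
  | cons x l ih =>
    have ih' := ih fun y hy => h y (List.mem_cons_of_mem x hy)
    cases hx : p x <;> simp [hx, ih', h x List.mem_cons_self]

theorem monProd_eq_prod_finRange {n : ℕ} {deg : Fin n → ℕ} {A : Type} [Ring A]
    (g : Fin n → A) (e : MonIdx (Fin n) deg) :
    monProd deg g e = ((List.finRange n).map fun i => g i ^ e.1 i).prod := by
  have hsort : e.1.support.sort (· ≤ ·) = (List.finRange n).filter (· ∈ e.1.support) :=
    (Finset.sortedLT_sort _).pairwise.eq_of_mem_iff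
      ((List.sortedLT_finRange n).pairwise.filter _) (by simp)
  rw [monProd, hsort]
  exact List.prod_map_filter_of_eq_one _ _ _ fun i _ hi => by simp_all

namespace FGCA0

variable {ι : Type} [LinearOrder ι] {deg : ι → ℕ} {A : Type} [Ring A] [Algebra ℚ A]
  (M : FGCA0 ι deg A)

theorem gen_pow_mem (i : ι) (n : ℕ) : M.gen i ^ n ∈ M.grading (n * deg i) := by
  induction n with
  | zero => simpa using M.one_mem
  | succ n ih => simpa [pow_succ, add_mul] using M.mul_mem ih (M.gen_mem i)

theorem basis_mem_grading (e : MonIdx ι deg) : M.basis e ∈ M.grading (monDeg deg e) := by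
  rw [M.basis_eq, M.grading_eq]
  exact Submodule.subset_span ⟨e, rfl, rfl⟩

theorem commute_gen_of_even {i : ι} (hi : Even (deg i)) (u : A) : Commute (M.gen i) u := by
  have : LinearMap.mulLeft ℚ (M.gen i) = LinearMap.mulRight ℚ (M.gen i) :=
    M.basis.ext fun e => by
      rw [LinearMap.mulLeft_apply, LinearMap.mulRight_apply,
        M.gcomm _ _ (M.gen_mem i) (M.basis_mem_grading e), (hi.mul_right _).neg_one_pow,
        one_smul]
  exact LinearMap.congr_fun this u

theorem gen_anticomm_of_odd {i j : ι} (hi : Odd (deg i)) (hj : Odd (deg j)) :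
    M.gen j * M.gen i = -(M.gen i * M.gen j) := by
  rw [M.gcomm _ _ (M.gen_mem j) (M.gen_mem i), (hj.mul hi).neg_one_pow, neg_one_smul]

theorem gen_mul_self_of_odd {i : ι} (hi : Odd (deg i)) : M.gen i * M.gen i = 0 := by
  have := IsAddTorsionFree.of_module_rat (M := A)
  exact self_eq_neg.mp (M.gen_anticomm_of_odd hi hi)

end FGCA0

structure OneEvenThreeOdd (deg : Fin 4 → ℕ) : Prop where
  even_zero : Even (deg 0)
  odd_of_ne_zero : ∀ i, i ≠ 0 → Odd (deg i)

namespace OneEvenThreeOdd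

variable {deg : Fin 4 → ℕ}

noncomputable def wordIndexEquiv (hdeg : OneEvenThreeOdd deg) :
    WordIndex ≃ MonIdx (Fin 4) deg where
  toFun p := ⟨Finsupp.equivFunOnFinite.symm ![p.1, p.2.1.toNat, p.2.2.1.toNat, p.2.2.2.toNat],
    fun i hi => by
      fin_cases i
      · exact absurd hi (Nat.not_odd_iff_even.mpr hdeg.even_zero)
      all_goals exact Bool.toNat_le _⟩
  invFun e := (e.1 0, e.1 1 = 1, e.1 2 = 1, e.1 3 = 1)
  left_inv := fun ⟨a, b, c, d⟩ => by cases b <;> cases c <;> cases d <;> rfl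
  right_inv e := by
    have h (i : Fin 4) (hi : i ≠ 0) : (decide (e.1 i = 1)).toNat = e.1 i := by
      have := e.2 i (hdeg.odd_of_ne_zero i hi)
      interval_cases e.1 i <;> rfl
    refine Subtype.ext <| Finsupp.ext fun i => ?_
    fin_cases i
    · rfl
    all_goals exact h _ (by decide)

theorem coe_wordIndexEquiv (hdeg : OneEvenThreeOdd deg) (p : WordIndex) :
    (hdeg.wordIndexEquiv p).1 =
      Finsupp.equivFunOnFinite.symm ![p.1, p.2.1.toNat, p.2.2.1.toNat, p.2.2.2.toNat] :=
  rfl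

theorem monProd_wordIndexEquiv (hdeg : OneEvenThreeOdd deg) {A : Type} [Ring A] (g : Fin 4 → A)
    (p : WordIndex) : monProd deg g (hdeg.wordIndexEquiv p) = word g p := by
  obtain ⟨a, b, c, d⟩ := p
  simp [monProd_eq_prod_finRange, List.finRange_succ, word, coe_wordIndexEquiv, mul_assoc]

end OneEvenThreeOdd

namespace FGCA0

variable {deg : Fin 4 → ℕ} {A : Type} [Ring A] [Algebra ℚ A] (M : FGCA0 (Fin 4) deg A)
  (hdeg : OneEvenThreeOdd deg)

noncomputable def wordBasis : Module.Basis (WordIndex) ℚ A :=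
  M.basis.reindex hdeg.wordIndexEquiv.symm

theorem wordBasis_apply (p : WordIndex) : M.wordBasis hdeg p = word M.gen p := by
  rw [wordBasis, Module.Basis.reindex_apply, Equiv.symm_symm, M.basis_eq,
    hdeg.monProd_wordIndexEquiv]

include hdeg in
theorem gradedCommRelations : GradedCommRelations M.gen where
  commute _ := M.commute_gen_of_even hdeg.even_zero _
  mul_self i hi := M.gen_mul_self_of_odd (hdeg.odd_of_ne_zero i hi)
  anticomm i j hi hj := M.gen_anticomm_of_odd (hdeg.odd_of_ne_zero i hi) (hdeg.odd_of_ne_zero j hj)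

include hdeg in
theorem exists_algHom_word_eq {R : Type*} [Ring R] [Algebra ℚ R] {g : Fin 4 → R}
    (hg : GradedCommRelations g) : ∃ F : A →ₐ[ℚ] R, ∀ p, F (word M.gen p) = word g p := by
  let F := (M.wordBasis hdeg).constr ℚ (word g)
  have hF (p) : F (word M.gen p) = word g p := by
    rw [← M.wordBasis_apply hdeg, Module.Basis.constr_basis]
  have hmul : (LinearMap.mul ℚ A).compr₂ F = (LinearMap.mul ℚ R).compl₁₂ F F :=
    LinearMap.ext_basis (M.wordBasis hdeg) (M.wordBasis hdeg) fun p q => by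
      simp only [LinearMap.compr₂_apply, LinearMap.compl₁₂_apply, LinearMap.mul_apply',
        M.wordBasis_apply, (M.gradedCommRelations hdeg).word_mul_word, hg.word_mul_word,
        map_smul, hF]
  have hone : F 1 = 1 := by simpa [word] using hF (0, false, false, false)
  exact ⟨AlgHom.ofLinearMap F hone fun u v => LinearMap.congr_fun₂ hmul u v, hF⟩

end FGCA0

structure HasDiffXYAddTPow {deg : Fin 4 → ℕ} {A : Type} [Ring A] [Algebra ℚ A]
    (M : FGCA (Fin 4) deg A) (k : ℕ) : Prop where
  d_t : M.D (M.gen 0) = 0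
  d_x : M.D (M.gen 1) = 0
  d_y : M.D (M.gen 2) = 0
  d_z : M.D (M.gen 3) = M.gen 1 * M.gen 2 + M.gen 0 ^ k

namespace FGCA

variable {ι : Type} [LinearOrder ι] {deg : ι → ℕ} {A : Type} [Ring A] [Algebra ℚ A]
  (M : FGCA ι deg A)

theorem D_mul_of_mem {n : ℕ} {u : A} (hu : u ∈ M.grading n) (v : A) :
    M.D (u * v) = M.D u * v + (-1 : ℚ) ^ n • (u * M.D v) :=
  M.isDifferential.1.2 n u v hu

theorem D_mul_eq_zero {n : ℕ} {u v : A} (hu : u ∈ M.grading n) (hDu : M.D u = 0)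
    (hDv : M.D v = 0) : M.D (u * v) = 0 := by
  rw [M.D_mul_of_mem hu, hDu, hDv, zero_mul, mul_zero, smul_zero, add_zero]

theorem D_one : M.D 1 = 0 := by
  simpa using M.D_mul_of_mem M.one_mem 1

theorem D_gen_pow_eq_zero {i : ι} (h : M.D (M.gen i) = 0) (n : ℕ) : M.D (M.gen i ^ n) = 0 := by
  induction n with
  | zero => simpa using M.D_one
  | succ n ih => rw [pow_succ]; exact M.D_mul_eq_zero (M.gen_pow_mem i n) ih h

end FGCA

namespace HasDiffXYAddTPow

variable {deg : Fin 4 → ℕ} {A : Type} [Ring A] [Algebra ℚ A] {M : FGCA (Fin 4) deg A}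
  {k : ℕ} (hdeg : OneEvenThreeOdd deg) (hD : HasDiffXYAddTPow M k)

include hD in
theorem D_word_false (a : ℕ) (b c : Bool) : M.D (word M.gen (a, b, c, false)) = 0 := by
  have hxy : M.D (M.gen 1 ^ b.toNat * M.gen 2 ^ c.toNat) = 0 :=
    M.D_mul_eq_zero (M.gen_pow_mem 1 _) (M.D_gen_pow_eq_zero hD.d_x _)
      (M.D_gen_pow_eq_zero hD.d_y _)
  simpa [word] using M.D_mul_eq_zero (M.gen_pow_mem 0 a) (M.D_gen_pow_eq_zero hD.d_t a) hxy

include hdeg hD in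
theorem D_word_true (a : ℕ) (b c : Bool) :
    M.D (word M.gen (a, b, c, true)) =
      (if b || c then 0 else word M.gen (a, true, true, false)) +
        (-1 : ℚ) ^ (b.toNat + c.toNat) • word M.gen (a + k, b, c, false) := by
  have hmem : word M.gen (a, b, c, false) ∈
      M.grading (a * deg 0 + (b.toNat * deg 1 + c.toNat * deg 2 + 0 * deg 3)) :=
    M.mul_mem (M.gen_pow_mem 0 a)
      (M.mul_mem (M.mul_mem (M.gen_pow_mem 1 _) (M.gen_pow_mem 2 _)) (M.gen_pow_mem 3 0))
  have hsign : (-1 : ℚ) ^ (a * deg 0 + (b.toNat * deg 1 + c.toNat * deg 2 + 0 * deg 3)) =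
      (-1) ^ (b.toNat + c.toNat) := by
    simp [pow_add, pow_mul', hdeg.even_zero.neg_one_pow,
      (hdeg.odd_of_ne_zero 1 (by decide)).neg_one_pow,
      (hdeg.odd_of_ne_zero 2 (by decide)).neg_one_pow]
  have hsplit : word M.gen (a, b, c, true) = word M.gen (a, b, c, false) * M.gen 3 := by
    simp [word, mul_assoc]
  have hxy : M.gen 1 * M.gen 2 = word M.gen (0, true, true, false) := by simp [word]
  have ht : M.gen 0 ^ k = word M.gen (k, false, false, false) := by simp [word]
  have hrel := M.gradedCommRelations hdeg
  rw [hsplit, M.D_mul_of_mem hmem, hD.D_word_false, zero_mul, zero_add, hsign, hD.d_z, hxy, ht,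
    mul_add, hrel.word_mul_word, hrel.word_mul_word]
  cases b <;> cases c <;> simp [wordMulCoeff, wordMulIndex]

end HasDiffXYAddTPow

theorem finiteCohomology_of_homotopy {ι A : Type} [Ring A] [Algebra ℚ A]
    (b : Module.Basis ι ℚ A) {D : A →ₗ[ℚ] A} (hD : ∀ x, D (D x) = 0) (G : A →ₗ[ℚ] A)
    (W : Submodule ℚ A) [FiniteDimensional ℚ W] (hW : ∀ i, b i - D (G (b i)) - G (D (b i)) ∈ W) :
    FiniteCohomology D := by
  have hP (v : A) : v - D (G v) - G (D v) ∈ W := by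
    let P : A →ₗ[ℚ] A := LinearMap.id - D ∘ₗ G - G ∘ₗ D
    have hPW : (Submodule.span ℚ (Set.range b)).map P ≤ W :=
      (Submodule.map_span_le P _ W).2 fun _ ⟨i, hi⟩ => hi ▸ hW i
    exact hPW (Submodule.mem_map_of_mem (b.mem_span v))
  let K := LinearMap.ker D
  let B := (LinearMap.range D).comap K.subtype
  refine Module.Finite.of_surjective
    (B.mkQ ∘ₗ Submodule.inclusion (inf_le_right : W ⊓ K ≤ K)) ?_
  intro q
  obtain ⟨⟨v, hv⟩, rfl⟩ := B.mkQ_surjective q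
  have hDv : D v = 0 := hv
  have hw : v - D (G v) ∈ W ⊓ K :=
    ⟨by simpa [hDv] using hP v, by simp [K, LinearMap.mem_ker, hDv, hD]⟩
  refine ⟨⟨_, hw⟩, (Submodule.Quotient.eq B).2 ⟨-G v, ?_⟩⟩
  simp

namespace FGCA0

variable {deg : Fin 4 → ℕ} {A : Type} [Ring A] [Algebra ℚ A] (M : FGCA0 (Fin 4) deg A)
  (hdeg : OneEvenThreeOdd deg) (k : ℕ)

/-- A left inverse of `D` on the words containing `z`. It inverts
`D (t^(a-k) x^b y^c z) = (-1)^(b+c) t^a x^b y^c + [b = c = 0] t^(a-k) x y`, the second term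
being cancelled by `D (t^(a-2k) x y z) = t^(a-k) x y`. -/
noncomputable def zPrimitive : A →ₗ[ℚ] A :=
  (M.wordBasis hdeg).constr ℚ fun
    | (_, _, _, true) => 0
    | (a, b, c, false) =>
      (if k ≤ a then (-1 : ℚ) ^ (b.toNat + c.toNat) • word M.gen (a - k, b, c, true) else 0) -
        if (b || c) = false ∧ 2 * k ≤ a then word M.gen (a - 2 * k, true, true, true) else 0

theorem zPrimitive_word_true (a : ℕ) (b c : Bool) :
    M.zPrimitive hdeg k (word M.gen (a, b, c, true)) = 0 := by
  rw [zPrimitive, ← M.wordBasis_apply hdeg, Module.Basis.constr_basis]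

theorem zPrimitive_word_false (a : ℕ) (b c : Bool) :
    M.zPrimitive hdeg k (word M.gen (a, b, c, false)) =
      (if k ≤ a then (-1 : ℚ) ^ (b.toNat + c.toNat) • word M.gen (a - k, b, c, true) else 0) -
        if (b || c) = false ∧ 2 * k ≤ a then word M.gen (a - 2 * k, true, true, true)
        else 0 := by
  rw [zPrimitive, ← M.wordBasis_apply hdeg, Module.Basis.constr_basis]

def lowWords (n : ℕ) : Submodule ℚ A :=
  Submodule.span ℚ (word M.gen '' {p | p.1 < n})

theorem word_mem_lowWords {n : ℕ} {p : WordIndex} (hp : p.1 < n) :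
    word M.gen p ∈ M.lowWords n :=
  Submodule.subset_span ⟨p, hp, rfl⟩

instance (n : ℕ) : FiniteDimensional ℚ (M.lowWords n) :=
  FiniteDimensional.span_of_finite ℚ <| Set.Finite.image _ <|
    ((Set.finite_Iio n).prod (Set.finite_univ (α := Bool × Bool × Bool))).subset
      fun _ hp => ⟨hp, trivial⟩

end FGCA0

namespace HasDiffXYAddTPow

variable {deg : Fin 4 → ℕ} {A : Type} [Ring A] [Algebra ℚ A] {M : FGCA (Fin 4) deg A}
  {k : ℕ} (hdeg : OneEvenThreeOdd deg) (hD : HasDiffXYAddTPow M k)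

include hD in
theorem zPrimitive_D_word_true (a : ℕ) (b c : Bool) :
    M.zPrimitive hdeg k (M.D (word M.gen (a, b, c, true))) = word M.gen (a, b, c, true) := by
  rw [hD.D_word_true hdeg]
  have h2k : 2 * k ≤ a + k ↔ k ≤ a := by omega
  have hsub : a + k - 2 * k = a - k := by omega
  cases b <;> cases c <;> simp [FGCA0.zPrimitive_word_false, h2k, hsub]

include hD in
theorem D_zPrimitive_word_false_of_le (a : ℕ) (b c : Bool) (ha : 2 * k ≤ a) :
    M.D (M.zPrimitive hdeg k (word M.gen (a, b, c, false))) = word M.gen (a, b, c, false) := by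
  have hk : k ≤ a := by omega
  have hsub : a - 2 * k + k = a - k := by omega
  cases b <;> cases c <;>
    simp [FGCA0.zPrimitive_word_false, hD.D_word_true hdeg, ha, hk, hsub, Nat.sub_add_cancel hk]

include hD in
theorem word_sub_D_zPrimitive_sub_mem (p : WordIndex) :
    word M.gen p - M.D (M.zPrimitive hdeg k (word M.gen p)) -
      M.zPrimitive hdeg k (M.D (word M.gen p)) ∈ M.lowWords (2 * k) := by
  obtain ⟨a, b, c, _ | _⟩ := p
  · rw [hD.D_word_false, map_zero, sub_zero]
    by_cases ha : 2 * k ≤ a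
    · rw [hD.D_zPrimitive_word_false_of_le hdeg a b c ha, sub_self]
      exact zero_mem _
    · have hlow {p : WordIndex} (hp : p.1 ≤ a) : word M.gen p ∈ M.lowWords (2 * k) :=
        M.word_mem_lowWords (by omega)
      refine Submodule.sub_mem _ (hlow le_rfl) ?_
      rw [FGCA0.zPrimitive_word_false, if_neg (c := _ ∧ _) fun h => ha h.2, sub_zero]
      split_ifs with hk
      · rw [map_smul, hD.D_word_true hdeg, Nat.sub_add_cancel hk]
        refine Submodule.smul_mem _ _
          (Submodule.add_mem _ ?_ (Submodule.smul_mem _ _ (hlow le_rfl)))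
        split_ifs
        exacts [zero_mem _, hlow (Nat.sub_le a k)]
      · rw [map_zero]
        exact zero_mem _
  · simp [FGCA0.zPrimitive_word_true, hD.zPrimitive_D_word_true hdeg]

include hdeg hD in
theorem finiteCohomology : FiniteCohomology M.D :=
  finiteCohomology_of_homotopy (M.wordBasis hdeg) M.isDifferential.2 (M.zPrimitive hdeg k)
    (M.lowWords (2 * k)) fun p => by
      simpa only [FGCA0.wordBasis_apply] using hD.word_sub_D_zPrimitive_sub_mem hdeg p

end HasDiffXYAddTPow

theorem HasDiffXYAddTPow.exists_dgaHom {degM degN : Fin 4 → ℕ} {A B : Type}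
    [Ring A] [Algebra ℚ A] [Ring B] [Algebra ℚ B] {M : FGCA (Fin 4) degM A}
    {N : FGCA (Fin 4) degN B} (hM : OneEvenThreeOdd degM) (hN : OneEvenThreeOdd degN) {k : ℕ}
    (hDM : HasDiffXYAddTPow M k) (hDN : HasDiffXYAddTPow N (k + 2)) :
    ∃ F : B →ₐ[ℚ] A, F (N.gen 0) = M.gen 0 ∧
      F (N.gen 1) = M.gen 1 * M.gen 0 ∧
      F (N.gen 2) = M.gen 2 * M.gen 0 ∧
      F (N.gen 3) = M.gen 3 * M.gen 0 ^ 2 ∧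
      ∀ x, F (N.D x) = M.D (F x) := by
  let u : Fin 4 → A := ![1, M.gen 0, M.gen 0, M.gen 0 ^ 2]
  have hu (i : Fin 4) (r : A) : Commute (u i) r := by
    have ht := M.commute_gen_of_even hM.even_zero r
    fin_cases i
    exacts [Commute.one_left r, ht, ht, ht.pow_left 2]
  obtain ⟨F, hF⟩ := N.exists_algHom_word_eq hN ((M.gradedCommRelations hM).mul_central hu)
  have hFword (a : ℕ) (b c d : Bool) : F (word N.gen (a, b, c, d)) =
      word M.gen (a + (b.toNat + c.toNat + 2 * d.toNat), b, c, d) := by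
    rw [hF, word_mul_central hu, (M.gradedCommRelations hM).word_add_fst]
    simp [word, u, ← pow_mul, ← pow_add]
  have hFD : F.toLinearMap ∘ₗ N.D = M.D ∘ₗ F.toLinearMap :=
    (N.wordBasis hN).ext fun ⟨a, b, c, d⟩ => by
      simp only [LinearMap.comp_apply, N.wordBasis_apply, AlgHom.toLinearMap_apply]
      cases d
      · rw [hDN.D_word_false, map_zero, hFword, hDM.D_word_false]
      · rw [hDN.D_word_true hN, hFword, hDM.D_word_true hM, map_add, map_smul, apply_ite F,
          map_zero, hFword, hFword]
        cases b <;> cases c <;> simp <;> ring_nf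
  refine ⟨F, ?_, ?_, ?_, ?_, fun x => LinearMap.congr_fun hFD x⟩
  · simpa [word, u] using hF (1, false, false, false)
  · simpa [word, u] using hF (0, true, false, false)
  · simpa [word, u] using hF (0, false, true, false)
  · simpa [word, u] using hF (0, false, false, true)

/-- The DGA `(ℚ[t] ⊗ Λ(x,y,z), D₁)` with `|t| = 2`,
`|x| = 3`, `|y| = 5`, `|z| = 7`, `D₁t = D₁x = D₁y = 0`, `D₁z = xy + t⁴` has
finite-dimensional cohomology; the DGA `(ℚ[t] ⊗ Λ(x',y',z'), D₂)` with
`|t| = 2`, `|x'| = 5`, `|y'| = 7`, `|z'| = 11`, `D₂t = D₂x' = D₂y' = 0`,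
`D₂z' = x'y' + t⁶` has finite-dimensional cohomology; and the `ℚ[t]`-algebra
map `F` with `F x' = xt`, `F y' = yt`, `F z' = zt²` is a map of DGAs
`(ℚ[t] ⊗ Λ(x',y',z'), D₂) → (ℚ[t] ⊗ Λ(x,y,z), D₁)`. -/
theorem statement6 (A B : Type) [Ring A] [Algebra ℚ A] [Ring B] [Algebra ℚ B]
    (M : FGCA (Fin 4) ![2, 3, 5, 7] A)
    (hMt : M.D (M.gen 0) = 0) (hMx : M.D (M.gen 1) = 0) (hMy : M.D (M.gen 2) = 0)
    (hMz : M.D (M.gen 3) = M.gen 1 * M.gen 2 + M.gen 0 ^ 4)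
    (N : FGCA (Fin 4) ![2, 5, 7, 11] B)
    (hNt : N.D (N.gen 0) = 0) (hNx : N.D (N.gen 1) = 0) (hNy : N.D (N.gen 2) = 0)
    (hNz : N.D (N.gen 3) = N.gen 1 * N.gen 2 + N.gen 0 ^ 6) :
    FiniteCohomology M.D ∧ FiniteCohomology N.D ∧
    ∃ F : B →ₐ[ℚ] A, F (N.gen 0) = M.gen 0 ∧
      F (N.gen 1) = M.gen 1 * M.gen 0 ∧
      F (N.gen 2) = M.gen 2 * M.gen 0 ∧
      F (N.gen 3) = M.gen 3 * M.gen 0 ^ 2 ∧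
      ∀ x, F (N.D x) = M.D (F x) := by
  have hM : OneEvenThreeOdd ![2, 3, 5, 7] := ⟨by decide, by decide⟩
  have hN : OneEvenThreeOdd ![2, 5, 7, 11] := ⟨by decide, by decide⟩
  have hDM : HasDiffXYAddTPow M 4 := ⟨hMt, hMx, hMy, hMz⟩
  have hDN : HasDiffXYAddTPow N (4 + 2) := ⟨hNt, hNx, hNy, hNz⟩
  exact ⟨hDM.finiteCohomology hM, hDN.finiteCohomology hN, hDM.exists_dgaHom hM hN hDN⟩
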